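/- Let m, n, r be nonnegative integers with 0 ≤ r < m. Then Σ_{j=0}^∞ (−1)^j · a_{r,m}(n − j(3j+1)/2) = Σ_{j=0}^∞ (mj + r)·N(n − mj − r). -/

import Mathlib

/-!
Every partition of `n` containing the part `d` arises from a partition of `n - d` by adding `d`,
so `a_{r,m}(x) = ∑ᵢ (m i + r) p(x - m i - r)`.

Let `M_k(x)` count the partitions of `x` of rank at least `-k`. Dyson's adjoint map (add a part
`#parts - k - 1`, then remove the first column of the Ferrers diagram) is a bijection from the
partitions of `x` of rank at most `-k-1` onto the partitions of `x - k - 2` of rank at least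
`-k-3`, so `M_k(x) + M_{k+3}(x - k - 2) = p(x)`. Iterating from `k = 0`, the shifts add up to the
pentagonal numbers and `N(x) = ∑ⱼ (-1)^j p(x - j(3j+1)/2)`. Substituting both expansions, the two
sides of the theorem become the same finite double sum.
-/

noncomputable section

/-- `partitionCount n` is the number of partitions of `n`. -/
def partitionCount (n : ℕ) : ℕ := Nat.card (Nat.Partition n)

/-- `p` extended to `ℤ`, vanishing on negative arguments. -/
def pZ (x : ℤ) : ℤ := if 0 ≤ x then partitionCount x.toNat else 0

/-- `a r m n` is the sum of all different parts congruent to `r` mod `m`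
in all partitions of `n` (each distinct part value counted once per partition). -/
def a (r m n : ℕ) : ℕ :=
  ∑ l : Nat.Partition n, ∑ d ∈ l.parts.toFinset, if d % m = r then d else 0

/-- `a r m` extended to `ℤ`, vanishing on negative arguments. -/
def aZ (r m : ℕ) (x : ℤ) : ℤ := if 0 ≤ x then a r m x.toNat else 0

/-- `s m n` is the sum of different parts appearing at least `m` times
in all partitions of `n` (each such distinct part value counted once per partition). -/
def s (m n : ℕ) : ℕ :=
  ∑ l : Nat.Partition n, ∑ d ∈ l.parts.toFinset, if m ≤ l.parts.count d then d else 0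

/-- `s m` extended to `ℤ`, vanishing on negative arguments. -/
def sZ (m : ℕ) (x : ℤ) : ℤ := if 0 ≤ x then s m x.toNat else 0

/-- `peo n = p_e(n) - p_o(n)`: partitions with an even number of parts minus
partitions with an odd number of parts. -/
def peo (n : ℕ) : ℤ :=
  (Nat.card {l : Nat.Partition n // Even (Multiset.card l.parts)} : ℤ) -
    (Nat.card {l : Nat.Partition n // Odd (Multiset.card l.parts)} : ℤ)

/-- `peo` extended to `ℤ`, vanishing on negative arguments. -/
def peoZ (x : ℤ) : ℤ := if 0 ≤ x then peo x.toNat else 0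

/-- Number of partitions of `n` into distinct parts, all odd. -/
def qodd (n : ℕ) : ℕ :=
  Nat.card {l : Nat.Partition n // l.parts.Nodup ∧ ∀ d ∈ l.parts, Odd d}

/-- `qodd` extended to `ℤ`, vanishing on negative arguments. -/
def qoddZ (x : ℤ) : ℤ := if 0 ≤ x then qodd x.toNat else 0

/-- Number of partitions of `n` into distinct parts. -/
def q (n : ℕ) : ℕ := Nat.card {l : Nat.Partition n // l.parts.Nodup}

/-- `q(x/2)`, set to `0` whenever `x/2` is not a nonnegative integer. -/
def qHalfZ (x : ℤ) : ℤ := if 0 ≤ x ∧ 2 ∣ x then q (x.toNat / 2) else 0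

/-- The rank of a partition: its largest part minus its number of parts
(the empty partition has rank 0). -/
def rank {n : ℕ} (l : Nat.Partition n) : ℤ :=
  (l.parts.sup : ℤ) - Multiset.card l.parts

/-- Number of partitions of `n` with nonnegative rank. -/
def N (n : ℕ) : ℕ := Nat.card {l : Nat.Partition n // 0 ≤ rank l}

/-- `N` extended to `ℤ`, vanishing on negative arguments. -/
def NZ (x : ℤ) : ℤ := if 0 ≤ x then N x.toNat else 0

/-- Number of partitions of `n` with positive rank. -/
def R (n : ℕ) : ℕ := Nat.card {l : Nat.Partition n // 0 < rank l}

/-- `R` extended to `ℤ`, vanishing on negative arguments. -/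
def RZ (x : ℤ) : ℤ := if 0 ≤ x then R x.toNat else 0

/-- Number of Garden of Eden partitions of `n`, i.e. partitions of rank at most `-2`. -/
def G (n : ℕ) : ℕ := Nat.card {l : Nat.Partition n // rank l ≤ -2}

/-- `G` extended to `ℤ`, vanishing on negative arguments. -/
def GZ (x : ℤ) : ℤ := if 0 ≤ x then G x.toNat else 0

/-- The crank of a partition: the largest part if no part equals 1, and otherwise
the number of parts larger than the multiplicity of 1 minus that multiplicity. -/
def crank {n : ℕ} (l : Nat.Partition n) : ℤ :=
  if Multiset.count 1 l.parts = 0 then (l.parts.sup : ℤ)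
  else (Multiset.card (Multiset.filter (fun d => Multiset.count 1 l.parts < d) l.parts) : ℤ)
    - Multiset.count 1 l.parts

/-- Number of partitions of `n` with nonnegative crank. -/
def C (n : ℕ) : ℕ := Nat.card {l : Nat.Partition n // 0 ≤ crank l}

/-- `C` extended to `ℤ`, vanishing on negative arguments. -/
def CZ (x : ℤ) : ℤ := if 0 ≤ x then C x.toNat else 0

/-- Number of partitions of `n` with positive crank. -/
def D (n : ℕ) : ℕ := Nat.card {l : Nat.Partition n // 0 < crank l}

/-- `D` extended to `ℤ`, vanishing on negative arguments. -/
def DZ (x : ℤ) : ℤ := if 0 ≤ x then D x.toNat else 0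

/-- The minimal excludant of a partition: the least positive integer that is not a part. -/
def mex {n : ℕ} (l : Nat.Partition n) : ℕ := sInf {k : ℕ | 0 < k ∧ k ∉ l.parts}

open Multiset

lemma pZ_of_neg {x : ℤ} (hx : x < 0) : pZ x = 0 := if_neg hx.not_ge

lemma aZ_of_neg {r m : ℕ} {x : ℤ} (hx : x < 0) : aZ r m x = 0 := if_neg hx.not_ge

lemma NZ_of_neg {x : ℤ} (hx : x < 0) : NZ x = 0 := if_neg hx.not_ge

lemma pZ_natCast_sub {n d : ℕ} (h : d ≤ n) : pZ ((n : ℤ) - d) = partitionCount (n - d) := by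
  rw [pZ, if_pos (by omega), ← Nat.cast_sub h, Int.toNat_natCast]

namespace Multiset

lemma sup_mem_of_ne_zero {s : Multiset ℕ} (hs : s ≠ 0) : s.sup ∈ s := by
  induction s using Multiset.induction with
  | empty => exact absurd rfl hs
  | cons a t ih =>
    rw [sup_cons]
    rcases eq_or_ne t 0 with rfl | ht
    · simp
    · rcases le_total a t.sup with hat | hta
      · rw [sup_eq_right.mpr hat]; exact mem_cons_of_mem (ih ht)
      · rw [sup_eq_left.mpr hta]; exact mem_cons_self a t

end Multiset

def dropColumn (L : Multiset ℕ) : Multiset ℕ := (L.map (· - 1)).filter (0 < ·)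

def addColumn (c : ℕ) (M : Multiset ℕ) : Multiset ℕ := M.map (· + 1) + replicate (c - card M) 1

section Columns

variable {L M : Multiset ℕ} {c : ℕ}

lemma card_dropColumn_le : card (dropColumn L) ≤ card L :=
  (card_le_card (filter_le _ _)).trans_eq (card_map _ _)

lemma dropColumn_cons (a : ℕ) (L : Multiset ℕ) :
    dropColumn (a ::ₘ L) = if 1 < a then (a - 1) ::ₘ dropColumn L else dropColumn L := by
  rw [dropColumn, map_cons]
  split_ifs with ha
  · exact filter_cons_of_pos _ (by omega)
  · exact filter_cons_of_neg _ (by omega)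

lemma sup_dropColumn : (dropColumn L).sup = L.sup - 1 := by
  induction L using Multiset.induction with
  | empty => simp [dropColumn]
  | cons a t ih =>
    rw [dropColumn_cons, sup_cons]
    split_ifs
    · rw [sup_cons, ih]; simp only [Nat.max_eq_max]; omega
    · rw [ih]; simp only [Nat.max_eq_max]; omega

lemma dropColumn_addColumn (hM : ∀ x ∈ M, 0 < x) : dropColumn (addColumn c M) = M := by
  have hzero : (replicate (c - card M) 0).filter (0 < ·) = 0 :=
    filter_eq_nil.mpr fun x hx => by simp [eq_of_mem_replicate hx]
  simpa [dropColumn, addColumn, filter_add, Function.comp_def, hzero] using filter_eq_self.mpr hM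

lemma addColumn_dropColumn (hL : ∀ x ∈ L, 0 < x) : addColumn (card L) (dropColumn L) = L := by
  induction L using Multiset.induction with
  | empty => simp [addColumn, dropColumn]
  | cons a t ih =>
    have ht : card (dropColumn t) ≤ card t := card_dropColumn_le
    have ha : 0 < a := hL a (mem_cons_self a t)
    conv_rhs => rw [← ih (fun x hx => hL x (mem_cons_of_mem hx))]
    rw [dropColumn_cons, card_cons, addColumn, addColumn]
    split_ifs with ha1
    · rw [map_cons, card_cons, Nat.add_sub_add_right, Nat.sub_add_cancel ha1.le, cons_add]
    · rw [Nat.sub_add_comm ht, replicate_succ, add_cons, show a = 1 by omega]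

lemma card_addColumn (h : card M ≤ c) : card (addColumn c M) = c := by
  rw [addColumn, card_add, card_map, card_replicate]
  omega

lemma sum_addColumn (h : card M ≤ c) : (addColumn c M).sum = M.sum + c := by
  simp only [addColumn, sum_add, sum_map_add, map_id', map_const', sum_replicate, smul_eq_mul,
    mul_one]
  omega

lemma sup_addColumn_le : (addColumn c M).sup ≤ M.sup + 1 := by
  refine Multiset.sup_le.mpr fun x hx => ?_
  rcases mem_add.mp hx with hx | hx
  · obtain ⟨y, hy, rfl⟩ := mem_map.mp hx
    exact Nat.add_le_add_right (le_sup hy) 1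
  · rw [eq_of_mem_replicate hx]; omega

lemma sum_dropColumn (hL : ∀ x ∈ L, 0 < x) : (dropColumn L).sum + card L = L.sum := by
  conv_rhs => rw [← addColumn_dropColumn hL]
  exact (sum_addColumn card_dropColumn_le).symm

lemma sup_add_one_mem_addColumn (hc : 0 < c) :
    M.sup + 1 ∈ addColumn c M := by
  rcases eq_or_ne M 0 with rfl | hM
  · simp [addColumn, mem_replicate, hc.ne']
  · exact mem_add.mpr (Or.inl (mem_map_of_mem _ (sup_mem_of_ne_zero hM)))

end Columns

def dysonMap (k : ℕ) (L : Multiset ℕ) : Multiset ℕ := dropColumn ((card L - (k + 1)) ::ₘ L)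

def dysonInv (k : ℕ) (M : Multiset ℕ) : Multiset ℕ :=
  (addColumn (M.sup + k + 3) M).erase (M.sup + 1)

section Dyson

variable {k : ℕ} {L M : Multiset ℕ}

lemma one_le_sup_of_card_le (hL : ∀ x ∈ L, 0 < x) (hrank : L.sup + k + 1 ≤ card L) :
    1 ≤ L.sup :=
  hL _ (sup_mem_of_ne_zero (card_pos.mp (by omega)))

lemma pos_of_mem_cons_card_sub (hL : ∀ x ∈ L, 0 < x) (hrank : L.sup + k + 1 ≤ card L) :
    ∀ x ∈ (card L - (k + 1)) ::ₘ L, 0 < x := by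
  have := one_le_sup_of_card_le hL hrank
  simpa using ⟨by omega, hL⟩

lemma sup_dysonMap (hrank : L.sup + k + 1 ≤ card L) :
    (dysonMap k L).sup = card L - (k + 2) := by
  rw [dysonMap, sup_dropColumn, sup_cons, sup_eq_left.mpr (by omega)]
  omega

lemma sum_dysonMap (hL : ∀ x ∈ L, 0 < x) (hrank : L.sup + k + 1 ≤ card L) :
    (dysonMap k L).sum + (k + 2) = L.sum := by
  have hsum := sum_dropColumn (pos_of_mem_cons_card_sub hL hrank)
  have := one_le_sup_of_card_le hL hrank
  rw [sum_cons, card_cons] at hsum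
  rw [dysonMap]
  omega

lemma dysonInv_dysonMap (hL : ∀ x ∈ L, 0 < x) (hrank : L.sup + k + 1 ≤ card L) :
    dysonInv k (dysonMap k L) = L := by
  have := one_le_sup_of_card_le hL hrank
  rw [dysonInv, sup_dysonMap hrank,
    show card L - (k + 2) + k + 3 = card ((card L - (k + 1)) ::ₘ L) by rw [card_cons]; omega,
    dysonMap, addColumn_dropColumn (pos_of_mem_cons_card_sub hL hrank),
    show card L - (k + 2) + 1 = card L - (k + 1) by omega, erase_cons_head]

lemma card_dysonMap_le : card (dysonMap k L) ≤ card L + 1 :=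
  card_dropColumn_le.trans_eq (card_cons _ _)

lemma card_dysonInv (hrank : card M ≤ M.sup + k + 3) : card (dysonInv k M) = M.sup + k + 2 := by
  rw [dysonInv, card_erase_of_mem (sup_add_one_mem_addColumn (by omega)), card_addColumn hrank]
  rfl

lemma sum_dysonInv (hrank : card M ≤ M.sup + k + 3) :
    (dysonInv k M).sum = M.sum + (k + 2) := by
  have hsum := sum_erase (sup_add_one_mem_addColumn (M := M) (c := M.sup + k + 3) (by omega))
  rw [sum_addColumn hrank] at hsum
  rw [dysonInv]
  omega

lemma sup_dysonInv_le : (dysonInv k M).sup ≤ M.sup + 1 :=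
  (sup_mono (erase_subset _ _)).trans sup_addColumn_le

lemma pos_of_mem_dysonInv (x : ℕ) (hx : x ∈ dysonInv k M) : 0 < x := by
  rcases mem_add.mp (mem_of_mem_erase hx) with hx | hx
  · obtain ⟨y, -, rfl⟩ := mem_map.mp hx
    omega
  · rw [eq_of_mem_replicate hx]
    omega

lemma dysonMap_dysonInv (hM : ∀ x ∈ M, 0 < x) (hrank : card M ≤ M.sup + k + 3) :
    dysonMap k (dysonInv k M) = M := by
  rw [dysonMap, card_dysonInv hrank, show M.sup + k + 2 - (k + 1) = M.sup + 1 by omega, dysonInv,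
    cons_erase (sup_add_one_mem_addColumn (by omega)), dropColumn_addColumn hM]

end Dyson

lemma Nat.Partition.card_parts_le {n : ℕ} (l : Nat.Partition n) : card l.parts ≤ n := by
  simpa [l.parts_sum] using card_nsmul_le_sum (s := l.parts) (a := 1) fun x hx => l.parts_pos hx

lemma sup_add_one_le_card_of_not_le_rank {n k : ℕ} {l : Nat.Partition n}
    (h : ¬ -(k : ℤ) ≤ rank l) : l.parts.sup + k + 1 ≤ card l.parts := by
  rw [rank] at h
  omega

lemma card_le_sup_add_of_le_rank {n k : ℕ} {l : Nat.Partition n}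
    (h : -((k + 3 : ℕ) : ℤ) ≤ rank l) : card l.parts ≤ l.parts.sup + k + 3 := by
  rw [rank] at h
  omega

def dysonEquiv (k n : ℕ) :
    {l : Nat.Partition (n + (k + 2)) // ¬ -(k : ℤ) ≤ rank l} ≃
      {l : Nat.Partition n // -((k + 3 : ℕ) : ℤ) ≤ rank l} where
  toFun l :=
    have hrank := sup_add_one_le_card_of_not_le_rank l.2
    ⟨⟨dysonMap k l.1.parts, fun hx => (mem_filter.mp hx).2, by
        have := sum_dysonMap (fun _ hx => l.1.parts_pos hx) hrank
        rw [l.1.parts_sum] at this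
        omega⟩, by
      have := card_dysonMap_le (k := k) (L := l.1.parts)
      rw [rank, sup_dysonMap hrank]
      push_cast
      omega⟩
  invFun l :=
    have hrank := card_le_sup_add_of_le_rank l.2
    ⟨⟨dysonInv k l.1.parts, fun hx => pos_of_mem_dysonInv _ hx, by
        rw [sum_dysonInv hrank, l.1.parts_sum]⟩, by
      have := sup_dysonInv_le (k := k) (M := l.1.parts)
      rw [rank, card_dysonInv hrank]
      push_cast
      omega⟩
  left_inv l := Subtype.ext <| Nat.Partition.ext <|
    dysonInv_dysonMap (fun _ hx => l.1.parts_pos hx) (sup_add_one_le_card_of_not_le_rank l.2)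
  right_inv l := Subtype.ext <| Nat.Partition.ext <|
    dysonMap_dysonInv (fun _ hx => l.1.parts_pos hx) (card_le_sup_add_of_le_rank l.2)

lemma neg_le_rank_of_lt {n k : ℕ} (l : Nat.Partition n) (h : n < k + 2) : -(k : ℤ) ≤ rank l := by
  rcases eq_or_ne l.parts 0 with h0 | h0
  · simp [rank, h0]
  · have := l.parts_pos (sup_mem_of_ne_zero h0)
    have := l.card_parts_le
    rw [rank]
    omega

lemma card_rank_ge_add_card_rank_ge (k n : ℕ) :
    Nat.card {l : Nat.Partition (n + (k + 2)) // -(k : ℤ) ≤ rank l} +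
        Nat.card {l : Nat.Partition n // -((k + 3 : ℕ) : ℤ) ≤ rank l} =
      partitionCount (n + (k + 2)) := by
  classical
  rw [← Nat.card_congr (dysonEquiv k n), partitionCount, Nat.card_eq_fintype_card,
    Nat.card_eq_fintype_card, Nat.card_eq_fintype_card, Fintype.card_subtype_compl,
    Nat.add_sub_cancel' (Fintype.card_subtype_le _)]

def rankGeZ (k : ℕ) (x : ℤ) : ℤ :=
  if 0 ≤ x then Nat.card {l : Nat.Partition x.toNat // -(k : ℤ) ≤ rank l} else 0

lemma rankGeZ_of_neg {k : ℕ} {x : ℤ} (hx : x < 0) : rankGeZ k x = 0 := if_neg hx.not_ge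

lemma rankGeZ_zero : rankGeZ 0 = NZ := by
  ext x
  simp [rankGeZ, NZ, N]

lemma rankGeZ_add_rankGeZ (k : ℕ) (x : ℤ) :
    rankGeZ k x + rankGeZ (k + 3) (x - (k + 2)) = pZ x := by
  rcases lt_or_ge x 0 with hx | hx
  · rw [rankGeZ_of_neg hx, rankGeZ_of_neg (by omega), pZ_of_neg hx, add_zero]
  lift x to ℕ using hx
  rcases lt_or_ge x (k + 2) with hxk | hxk
  · rw [rankGeZ_of_neg (k := k + 3) (by omega), add_zero, rankGeZ, pZ, if_pos (by omega),
      if_pos (by omega), Int.toNat_natCast, partitionCount,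
      Nat.card_congr (Equiv.subtypeUnivEquiv fun l => neg_le_rank_of_lt l hxk)]
  · obtain ⟨n, rfl⟩ := Nat.exists_eq_add_of_le' hxk
    rw [rankGeZ, rankGeZ, pZ, if_pos (by omega), if_pos (by omega), if_pos (by omega),
      show ((n + (k + 2) : ℕ) : ℤ) - (k + 2) = n by push_cast; ring, Int.toNat_natCast,
      Int.toNat_natCast, ← card_rank_ge_add_card_rank_ge k n]
    push_cast
    rfl

lemma pentagonal_neg_natCast (j : ℕ) : pentagonal (-j) = j * (3 * j + 1) / 2 := by
  rw [pentagonal_neg]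
  exact_mod_cast Int.toNat_natCast (j * (3 * j + 1) / 2)

lemma natCast_pentagonal_neg_succ (j : ℕ) :
    (pentagonal (-(j + 1 : ℕ)) : ℤ) = pentagonal (-j) + (3 * j + 2) := by
  have h₁ := two_mul_natCast_pentagonal_neg (j + 1 : ℕ)
  have h₀ := two_mul_natCast_pentagonal_neg j
  push_cast at h₁ h₀ ⊢
  linarith

lemma le_natCast_pentagonal_neg (j : ℕ) : (j : ℤ) ≤ pentagonal (-j) := by
  have := two_mul_natCast_pentagonal_neg j
  nlinarith

lemma rankGeZ_zero_eq_sum_add (J : ℕ) (x : ℤ) :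
    rankGeZ 0 x = ∑ j ∈ Finset.range J, (-1) ^ j * pZ (x - pentagonal (-j)) +
      (-1) ^ J * rankGeZ (3 * J) (x - pentagonal (-J)) := by
  induction J with
  | zero => simp [pentagonal]
  | succ J ih =>
    have hstep := rankGeZ_add_rankGeZ (3 * J) (x - pentagonal (-J))
    rw [ih, Finset.sum_range_succ, natCast_pentagonal_neg_succ,
      show 3 * (J + 1) = 3 * J + 3 by ring,
      show x - (pentagonal (-J) + (3 * J + 2) : ℤ) = x - pentagonal (-J) - ((3 * J : ℕ) + 2) by
        push_cast; ring]
    linear_combination (-1 : ℤ) ^ J * hstep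

lemma NZ_eq_sum {x : ℤ} {J : ℕ} (hx : x < J) :
    NZ x = ∑ j ∈ Finset.range J, (-1) ^ j * pZ (x - pentagonal (-j)) := by
  rw [← rankGeZ_zero, rankGeZ_zero_eq_sum_add J x,
    rankGeZ_of_neg (by have := le_natCast_pentagonal_neg J; omega), mul_zero, add_zero]

def Nat.Partition.eraseEquiv (u d : ℕ) (hd : 0 < d) :
    {l : Nat.Partition (u + d) // d ∈ l.parts} ≃ Nat.Partition u where
  toFun l := ⟨l.1.parts.erase d, fun hx => l.1.parts_pos (mem_of_mem_erase hx), by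
    have := sum_erase l.2
    rw [l.1.parts_sum] at this
    omega⟩
  invFun l := ⟨⟨d ::ₘ l.parts, fun hx => (mem_cons.mp hx).elim (· ▸ hd) l.parts_pos, by
    rw [sum_cons, l.parts_sum, add_comm]⟩, mem_cons_self _ _⟩
  left_inv l := Subtype.ext (Nat.Partition.ext (cons_erase l.2))
  right_inv l := Nat.Partition.ext (erase_cons_head _ _)

lemma card_filter_mem_parts {n d : ℕ} (hd : 0 < d) (hdn : d ≤ n) :
    (Finset.univ.filter fun l : Nat.Partition n => d ∈ l.parts).card = partitionCount (n - d) := by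
  obtain ⟨u, rfl⟩ := Nat.exists_eq_add_of_le' hdn
  rw [← Fintype.card_subtype, ← Nat.card_eq_fintype_card,
    Nat.card_congr (Nat.Partition.eraseEquiv u d hd), Nat.add_sub_cancel, partitionCount]

lemma sum_sum_toFinset_parts {M : Type*} [AddCommMonoid M] (g : ℕ → M) (n : ℕ) :
    ∑ l : Nat.Partition n, ∑ d ∈ l.parts.toFinset, g d =
      ∑ d ∈ Finset.Icc 1 n, partitionCount (n - d) • g d := by
  rw [Finset.sum_comm' (t' := Finset.Icc 1 n)
    (s' := fun d => Finset.univ.filter fun l : Nat.Partition n => d ∈ l.parts)]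
  · refine Finset.sum_congr rfl fun d hd => ?_
    rw [Finset.sum_const, card_filter_mem_parts (Finset.mem_Icc.mp hd).1 (Finset.mem_Icc.mp hd).2]
  · intro l d
    simp only [Finset.mem_univ, mem_toFinset, Finset.mem_filter, Finset.mem_Icc, true_and]
    exact ⟨fun h => ⟨h, l.parts_pos h, Nat.Partition.le_of_mem_parts h⟩, fun h => h.1⟩

lemma aZ_eq_sum {r m : ℕ} (h : r < m) {x : ℤ} {N : ℕ} (hx : x < N) :
    aZ r m x = ∑ i ∈ Finset.range N, ((m * i + r : ℕ) : ℤ) * pZ (x - (m * i + r : ℕ)) := by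
  rcases lt_or_ge x 0 with hneg | hx0
  · rw [aZ_of_neg hneg]
    exact (Finset.sum_eq_zero fun i _ => by rw [pZ_of_neg (by omega), mul_zero]).symm
  lift x to ℕ using hx0 with n
  have hmod (i : ℕ) : (m * i + r) % m = r := by rw [Nat.mul_add_mod, Nat.mod_eq_of_lt h]
  have hsubset : (Finset.Icc 1 n).filter (· % m = r) ⊆ (Finset.range N).image (m * · + r) := by
    intro d hd
    simp only [Finset.mem_filter, Finset.mem_Icc] at hd
    refine Finset.mem_image.mpr ⟨d / m, Finset.mem_range.mpr ?_, ?_⟩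
    · have := Nat.div_le_self d m
      omega
    · rw [← hd.2, Nat.div_add_mod]
  calc aZ r m n = ∑ d ∈ (Finset.Icc 1 n).filter (· % m = r), (d : ℤ) * pZ (n - d) := by
        rw [aZ, if_pos (by omega), Int.toNat_natCast, a, sum_sum_toFinset_parts, Finset.sum_filter]
        push_cast
        refine Finset.sum_congr rfl fun d hd => ?_
        rw [pZ_natCast_sub (Finset.mem_Icc.mp hd).2]
        split_ifs <;> simp [mul_comm]
    _ = ∑ d ∈ (Finset.range N).image (m * · + r), (d : ℤ) * pZ (n - d) := by
        refine Finset.sum_subset hsubset fun d hd hnot => ?_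
        obtain ⟨i, -, rfl⟩ := Finset.mem_image.mp hd
        rcases (m * i + r).eq_zero_or_pos with hzero | hpos
        · simp [hzero]
        by_cases hle : m * i + r ≤ n
        · exact absurd (Finset.mem_filter.mpr ⟨Finset.mem_Icc.mpr ⟨hpos, hle⟩, hmod i⟩) hnot
        · rw [pZ_of_neg (by omega), mul_zero]
    _ = _ := Finset.sum_image fun i _ j _ hij => by
        simpa [hmod, (show 0 < m by omega).ne'] using hij

/-- Merca, Corollary 5.2(i). -/
theorem a_pentagonal_N (m n r : ℕ) (h : r < m) :
    (∑' j : ℕ, (-1 : ℤ) ^ j * aZ r m ((n : ℤ) - (j * (3 * j + 1) / 2 : ℕ))) =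
      ∑' j : ℕ, ((m * j + r : ℕ) : ℤ) * NZ ((n : ℤ) - (m * j + r : ℕ)) := by
  simp only [← pentagonal_neg_natCast]
  have hlt (i : ℕ) : (n : ℤ) - i < n + 1 := by omega
  calc ∑' j : ℕ, (-1 : ℤ) ^ j * aZ r m (n - pentagonal (-j))
      = ∑ j ∈ Finset.range (n + 1), (-1) ^ j * aZ r m (n - pentagonal (-j)) :=
        tsum_eq_sum fun j hj => by
          have := le_natCast_pentagonal_neg j
          rw [Finset.mem_range, not_lt] at hj
          rw [aZ_of_neg (by omega), mul_zero]
    _ = ∑ j ∈ Finset.range (n + 1), ∑ i ∈ Finset.range (n + 1),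
          ((m * i + r : ℕ) : ℤ) * ((-1) ^ j * pZ (n - (m * i + r : ℕ) - pentagonal (-j))) := by
        refine Finset.sum_congr rfl fun j _ => ?_
        rw [aZ_eq_sum h (by exact_mod_cast hlt _), Finset.mul_sum]
        refine Finset.sum_congr rfl fun i _ => ?_
        rw [sub_right_comm]
        ring
    _ = ∑ i ∈ Finset.range (n + 1), ((m * i + r : ℕ) : ℤ) * NZ (n - (m * i + r : ℕ)) := by
        rw [Finset.sum_comm]
        refine Finset.sum_congr rfl fun i _ => ?_
        rw [NZ_eq_sum (by exact_mod_cast hlt _), Finset.mul_sum]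
    _ = _ := (tsum_eq_sum fun i hi => by
          have : i ≤ m * i := Nat.le_mul_of_pos_left i (by omega)
          rw [Finset.mem_range, not_lt] at hi
          rw [NZ_of_neg (by omega), mul_zero]).symm
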